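/- arXiv:2410.21987 — 4 statements merged into one kernel-verified Lean document; each statement's English description precedes it below -/
import Mathlib

section
/- Consider the GNW estimator f̂(x) = (∑_{i=1}^n y_i a_i)/(∑ a_i) when ∑ a_i > 0 and f̂(x) = 0 otherwise, where (x_i, ε_i, a_i) are i.i.d. triples with a_i Bernoulli with conditional mean k(x, x_i) given x_i, y_i = f(x_i) + ε_i, E[ε_i | x_i] = 0, ‖f‖_∞ ≤ B. Let c(x) = E[a_1] > 0 and S(f,x) = E[f(x_1) a_1]/c(x). Then E[f̂(x)] = S(f,x)·(1 - (1 - c(x))^n). -/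
open MeasureTheory ProbabilityTheory

lemma gnw_aux_prod_int {Ω : Type*} [MeasurableSpace Ω] {μ : Measure Ω}
    [IsProbabilityMeasure μ] {ι : Type*} [DecidableEq ι] {g : ι → Ω → ℝ}
    (hindep : iIndepFun g μ) (hm : ∀ i, Measurable (g i))
    (hint : ∀ i, Integrable (g i) μ) (s : Finset ι) :
    Integrable (fun ω => ∏ j ∈ s, g j ω) μ ∧
      ∫ ω, ∏ j ∈ s, g j ω ∂μ = ∏ j ∈ s, ∫ ω, g j ω ∂μ := by
  induction s using Finset.induction with
  | empty => simp
  | insert i s hi ih =>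
    have hIF : IndepFun (g i) (fun ω => ∏ j ∈ s, g j ω) μ := by
      have h := (iIndepFun.indepFun_finset_prod_of_notMem hindep hm hi).symm
      have : (∏ j ∈ s, g j) = fun ω => ∏ j ∈ s, g j ω := by
        funext ω; simp [Finset.prod_apply]
      rwa [this] at h
    have hint2 : Integrable (fun ω => g i ω * ∏ j ∈ s, g j ω) μ := by
      have := hIF.integrable_mul (hint i) ih.1
      exact this
    constructor
    · simpa [Finset.prod_insert hi] using hint2
    · have := hIF.integral_mul_eq_mul_integral (hint i).aestronglyMeasurable ih.1.aestronglyMeasurable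
      simp only [Finset.prod_insert hi]
      simpa [Pi.mul_apply, ih.2] using this

lemma gnw_aux_pointwise {n : ℕ} (a r : Fin n → ℝ) (hbin : ∀ i, a i = 0 ∨ a i = 1) :
    (if 0 < ∑ i, a i then (∑ i, r i * a i) / (∑ i, a i) else 0)
      = ∑ T : Finset (Fin n), (∏ i, (if i ∈ T then a i else 1 - a i)) *
          (if T.Nonempty then (∑ i ∈ T, r i) / T.card else 0) := by
  classical
  set T₀ : Finset (Fin n) := Finset.univ.filter (fun i => a i = 1) with hT₀
  have key1 : ∀ T : Finset (Fin n),
      (∏ i, (if i ∈ T then a i else 1 - a i)) = if T = T₀ then 1 else 0 := by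
    intro T
    by_cases hT : T = T₀
    · subst hT
      rw [if_pos rfl]
      apply Finset.prod_eq_one
      intro i _
      by_cases hai : a i = 1
      · have hi : i ∈ T₀ := by simp [hT₀, hai]
        simp [hi, hai]
      · have ha0 : a i = 0 := (hbin i).resolve_right hai
        have hi : i ∉ T₀ := by simp [hT₀, hai]
        simp [hi, ha0]
    · rw [if_neg hT]
      have hex : ∃ i, ¬ ((i ∈ T) ↔ (i ∈ T₀)) := by
        by_contra hcon
        push_neg at hcon
        exact hT (Finset.ext fun i => hcon i)
      obtain ⟨i, hi⟩ := hex
      apply Finset.prod_eq_zero (Finset.mem_univ i)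
      by_cases h1 : i ∈ T
      · have h2 : i ∉ T₀ := fun h => hi ⟨fun _ => h, fun _ => h1⟩
        have ha0 : a i = 0 := by
          rcases hbin i with h | h
          · exact h
          · exact absurd (by simp [hT₀, h] : i ∈ T₀) h2
        simp [h1, ha0]
      · have h2 : i ∈ T₀ := by
          by_contra h2
          exact hi ⟨fun h => absurd h h1, fun h => absurd h h2⟩
        have ha1 : a i = 1 := by simpa [hT₀] using h2
        simp [h1, ha1]
  have key2 : ∑ i, a i = (T₀.card : ℝ) := by
    have h : ∀ i, a i = if a i = 1 then (1 : ℝ) else 0 := by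
      intro i; rcases hbin i with h | h <;> simp [h]
    rw [Finset.sum_congr rfl fun i _ => h i]
    simp [hT₀]
  have key3 : ∑ i, r i * a i = ∑ i ∈ T₀, r i := by
    rw [← Finset.sum_filter_of_ne (p := fun i => a i = 1) (fun i _ h => by
      rcases hbin i with h0 | h1
      · exact absurd (by simp [h0]) h
      · exact h1)]
    apply Finset.sum_congr rfl
    intro i hi
    have h1 : a i = 1 := by simpa [hT₀] using hi
    simp [h1]
  simp_rw [key1, ite_mul, one_mul, zero_mul]
  rw [Finset.sum_ite_eq' Finset.univ T₀, if_pos (Finset.mem_univ _)]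
  rw [key2, key3]
  have hpos : (0 : ℝ) < (T₀.card : ℝ) ↔ T₀.Nonempty := by
    rw [Nat.cast_pos, Finset.card_pos]
  by_cases h : T₀.Nonempty
  · rw [if_pos (hpos.mpr h), if_pos h]
  · rw [if_neg (fun hc => h (hpos.mp hc)), if_neg h]

/-- Expectation of the Graphical Nadaraya–Watson estimator: under the GNW model
(i.i.d. triples `(x_i, ε_i, a_i)`, `{0,1}`-valued edges `a_i` with conditional mean
`k(x_i)` given `x_i`, centered noise independent of position and edge, bounded `f`),
with `c = E[a_1] > 0` and `S = E[f(x_1) a_1]/c`, one has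
`E[f̂_GNW] = S (1 - (1 - c)^n)`. -/
theorem gnw_expectation {Ω : Type*} [MeasurableSpace Ω]
    (μ : Measure Ω) [IsProbabilityMeasure μ]
    {d n : ℕ} (hn : 0 < n)
    (x : Fin n → Ω → EuclideanSpace ℝ (Fin d)) (ε a : Fin n → Ω → ℝ)
    (hxm : ∀ i, Measurable (x i)) (hεm : ∀ i, Measurable (ε i))
    (ham : ∀ i, Measurable (a i))
    (hindep : iIndepFun
      (fun i ω => (x i ω, ε i ω, a i ω)) μ)
    (hid : ∀ i, IdentDistrib (fun ω => (x i ω, ε i ω, a i ω))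
      (fun ω => (x ⟨0, hn⟩ ω, ε ⟨0, hn⟩ ω, a ⟨0, hn⟩ ω)) μ μ)
    (hbin : ∀ i ω, a i ω = 0 ∨ a i ω = 1)
    (hnoise : ∀ i, IndepFun (fun ω => (x i ω, a i ω)) (ε i) μ)
    (hεint : ∀ i, Integrable (ε i) μ)
    (hεmean : ∀ i, ∫ ω, ε i ω ∂μ = 0)
    (k : EuclideanSpace ℝ (Fin d) → ℝ)
    (hcond : ∀ i, μ[a i|MeasurableSpace.comap (x i) inferInstance]
      =ᵐ[μ] fun ω => k (x i ω))
    (f : EuclideanSpace ℝ (Fin d) → ℝ) (hfm : Measurable f)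
    (B : ℝ) (hB : ∀ z, |f z| ≤ B)
    (c : ℝ) (hc : c = ∫ ω, a ⟨0, hn⟩ ω ∂μ) (hcpos : 0 < c)
    (S : ℝ) (hS : S = (∫ ω, f (x ⟨0, hn⟩ ω) * a ⟨0, hn⟩ ω ∂μ) / c) :
    ∫ ω, (if 0 < ∑ i, a i ω then
        (∑ i, (f (x i ω) + ε i ω) * a i ω) / (∑ i, a i ω) else 0) ∂μ
      = S * (1 - (1 - c) ^ n) := by
  classical
  have habs : ∀ i ω, |a i ω| ≤ 1 := by
    intro i ω; rcases hbin i ω with h | h <;> simp [h]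
  have haint : ∀ i, Integrable (a i) μ := by
    intro i
    refine (integrable_const (1 : ℝ)).mono' (ham i).aestronglyMeasurable ?_
    exact Filter.Eventually.of_forall fun ω => by simpa [Real.norm_eq_abs] using habs i ω
  have hfint : ∀ i, Integrable (fun ω => f (x i ω)) μ := by
    intro i
    refine (integrable_const B).mono' (hfm.comp (hxm i)).aestronglyMeasurable ?_
    exact Filter.Eventually.of_forall fun ω => by simpa [Real.norm_eq_abs] using hB (x i ω)
  -- ∫ a i = c
  have hEa : ∀ i, ∫ ω, a i ω ∂μ = c := by
    intro i
    have h := ((hid i).comp (measurable_snd.comp measurable_snd)).integral_eq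
    rw [hc]
    exact h
  -- ∫ f(x i) * a i = S * c
  have hSc : (∫ ω, f (x ⟨0, hn⟩ ω) * a ⟨0, hn⟩ ω ∂μ) = S * c := by
    rw [hS]; field_simp
  have hEfa : ∀ i, ∫ ω, f (x i ω) * a i ω ∂μ = S * c := by
    intro i
    have hu : Measurable (fun p : EuclideanSpace ℝ (Fin d) × ℝ × ℝ => f p.1 * p.2.2) :=
      (hfm.comp measurable_fst).mul (measurable_snd.comp measurable_snd)
    have h := ((hid i).comp hu).integral_eq
    rw [← hSc]
    exact h
  -- ∫ ε i * a i = 0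
  have hEεa : ∀ i, ∫ ω, ε i ω * a i ω ∂μ = 0 := by
    intro i
    have hIF : IndepFun (a i) (ε i) μ :=
      (hnoise i).comp measurable_snd measurable_id
    have h := hIF.integral_mul_eq_mul_integral (haint i).aestronglyMeasurable (hεint i).aestronglyMeasurable
    have h2 : ∫ ω, a i ω * ε i ω ∂μ = (∫ ω, a i ω ∂μ) * ∫ ω, ε i ω ∂μ := by
      simpa [Pi.mul_apply] using h
    rw [show (fun ω => ε i ω * a i ω) = fun ω => a i ω * ε i ω from funext fun ω => mul_comm _ _]
    rw [h2, hεmean i, mul_zero]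
  have hfaint : ∀ i, Integrable (fun ω => (f (x i ω) + ε i ω) * a i ω) μ := by
    intro i
    have h := Integrable.bdd_mul (f := a i) ((hfint i).add (hεint i))
      (c := 1) (ham i).aestronglyMeasurable (Filter.Eventually.of_forall fun ω => by simpa [Real.norm_eq_abs] using habs i ω)
    exact h.congr (Filter.Eventually.of_forall fun ω => mul_comm _ _)
  -- main per-T computation
  have main : ∀ T : Finset (Fin n),
      Integrable (fun ω => (∏ i, (if i ∈ T then a i ω else 1 - a i ω)) *
        (if T.Nonempty then (∑ i ∈ T, (f (x i ω) + ε i ω)) / (T.card : ℝ) else 0)) μ ∧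
      (∫ ω, (∏ i, (if i ∈ T then a i ω else 1 - a i ω)) *
        (if T.Nonempty then (∑ i ∈ T, (f (x i ω) + ε i ω)) / (T.card : ℝ) else 0) ∂μ)
        = if T.Nonempty then S * ∏ j, (if j ∈ T then c else 1 - c) else 0 := by
    intro T
    by_cases hT : T.Nonempty
    · -- per-i key
      have keyi : ∀ i ∈ T,
          Integrable (fun ω => (f (x i ω) + ε i ω) *
            ∏ j, (if j ∈ T then a j ω else 1 - a j ω)) μ ∧
          (∫ ω, (f (x i ω) + ε i ω) * ∏ j, (if j ∈ T then a j ω else 1 - a j ω) ∂μ)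
            = S * ∏ j, (if j ∈ T then c else 1 - c) := by
        intro i hiT
        set g : Fin n → (EuclideanSpace ℝ (Fin d) × ℝ × ℝ) → ℝ := fun j p =>
          if j = i then (f p.1 + p.2.1) * p.2.2
          else if j ∈ T then p.2.2 else 1 - p.2.2 with hg
        have hgm : ∀ j, Measurable (g j) := by
          intro j
          by_cases hj : j = i
          · subst hj
            simp only [hg, if_pos rfl]
            exact ((hfm.comp measurable_fst).add
              (measurable_fst.comp measurable_snd)).mul (measurable_snd.comp measurable_snd)
          · simp only [hg, if_neg hj]
            by_cases hjT : j ∈ T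
            · simpa [hjT] using (show Measurable fun p : EuclideanSpace ℝ (Fin d) × ℝ × ℝ => p.2.2 from measurable_snd.comp measurable_snd)
            · simpa [hjT] using (show Measurable fun p : EuclideanSpace ℝ (Fin d) × ℝ × ℝ => 1 - p.2.2 from
                measurable_const.sub (measurable_snd.comp measurable_snd))
        set H : Fin n → Ω → ℝ := fun j ω => g j (x j ω, ε j ω, a j ω) with hH
        have hHm : ∀ j, Measurable (H j) := fun j =>
          (hgm j).comp ((hxm j).prodMk ((hεm j).prodMk (ham j)))
        have hHindep : iIndepFun H μ :=
          hindep.comp g hgm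
        have hHint : ∀ j, Integrable (H j) μ := by
          intro j
          by_cases hj : j = i
          · subst hj
            have : H j = fun ω => (f (x j ω) + ε j ω) * a j ω := by
              funext ω; simp [hH, hg]
            rw [this]; exact hfaint j
          · refine (integrable_const (1 : ℝ)).mono' (hHm j).aestronglyMeasurable ?_
            refine Filter.Eventually.of_forall fun ω => ?_
            simp only [hH, hg, if_neg hj]
            by_cases hjT : j ∈ T
            · simpa [hjT, Real.norm_eq_abs] using habs j ω
            · rcases hbin j ω with h | h <;> simp [hjT, h, Real.norm_eq_abs]
        have hprod := gnw_aux_prod_int hHindep hHm hHint Finset.univ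
        -- identify the product with our integrand
        have hGi : (fun ω => (f (x i ω) + ε i ω) *
            ∏ j, (if j ∈ T then a j ω else 1 - a j ω)) = fun ω => ∏ j, H j ω := by
          funext ω
          rw [← Finset.mul_prod_erase Finset.univ (fun j => H j ω) (Finset.mem_univ i),
            ← Finset.mul_prod_erase Finset.univ
              (fun j => if j ∈ T then a j ω else 1 - a j ω) (Finset.mem_univ i)]
          have h1 : H i ω = (f (x i ω) + ε i ω) * a i ω := by simp [hH, hg]
          have h2 : (if i ∈ T then a i ω else 1 - a i ω) = a i ω := if_pos hiT
          rw [h1, h2]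
          rw [← mul_assoc]
          congr 1
          apply Finset.prod_congr rfl
          intro j hj
          have hj' : j ≠ i := (Finset.mem_erase.mp hj).1
          simp [hH, hg, hj']
        -- integrals of factors
        have hHi : ∫ ω, H i ω ∂μ = S * c := by
          have hH1 : H i = fun ω => f (x i ω) * a i ω + ε i ω * a i ω := by
            funext ω; simp [hH, hg]; ring
          have hfa : Integrable (fun ω => f (x i ω) * a i ω) μ := by
            refine Integrable.bdd_mul (f := fun ω => f (x i ω)) (c := B) (haint i)
              (hfm.comp (hxm i)).aestronglyMeasurable (Filter.Eventually.of_forall fun ω => by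
                simpa [Real.norm_eq_abs] using hB (x i ω))
          have hεa : Integrable (fun ω => ε i ω * a i ω) μ := by
            have h := Integrable.bdd_mul (f := a i) (c := 1) (hεint i)
              (ham i).aestronglyMeasurable (Filter.Eventually.of_forall fun ω => by
                simpa [Real.norm_eq_abs] using habs i ω)
            exact h.congr (Filter.Eventually.of_forall fun ω => mul_comm _ _)
          rw [hH1, integral_add hfa hεa, hEfa i, hEεa i, add_zero]
        have hHj : ∀ j, j ≠ i → ∫ ω, H j ω ∂μ = if j ∈ T then c else 1 - c := by
          intro j hj
          by_cases hjT : j ∈ T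
          · have : H j = a j := by funext ω; simp [hH, hg, hj, hjT]
            rw [this, if_pos hjT]; exact hEa j
          · have : H j = fun ω => 1 - a j ω := by funext ω; simp [hH, hg, hj, hjT]
            rw [this, if_neg hjT, integral_sub (integrable_const 1) (haint j), hEa j]
            simp
        constructor
        · rw [hGi]; exact hprod.1
        · rw [hGi, hprod.2]
          rw [← Finset.mul_prod_erase Finset.univ (fun j => ∫ ω, H j ω ∂μ) (Finset.mem_univ i),
            ← Finset.mul_prod_erase Finset.univ (fun j => if j ∈ T then c else 1 - c)
              (Finset.mem_univ i)]
          rw [hHi, if_pos hiT, ← mul_assoc, mul_comm S c, mul_assoc, mul_assoc]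
          congr 2
          apply Finset.prod_congr rfl
          intro j hj
          exact hHj j (Finset.mem_erase.mp hj).1
      -- assemble over i ∈ T
      have hcard : (T.card : ℝ) ≠ 0 := by
        simpa using Finset.card_ne_zero_of_mem hT.choose_spec
      have hrw : (fun ω => (∏ i, (if i ∈ T then a i ω else 1 - a i ω)) *
          (if T.Nonempty then (∑ i ∈ T, (f (x i ω) + ε i ω)) / (T.card : ℝ) else 0))
          = fun ω => (T.card : ℝ)⁻¹ *
            ∑ i ∈ T, ((f (x i ω) + ε i ω) * ∏ j, (if j ∈ T then a j ω else 1 - a j ω)) := by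
        funext ω
        rw [if_pos hT, ← Finset.sum_mul]
        ring
      constructor
      · rw [hrw]
        exact (integrable_finset_sum T fun i hi => (keyi i hi).1).const_mul _
      · rw [hrw, MeasureTheory.integral_const_mul, integral_finset_sum T fun i hi => (keyi i hi).1]
        rw [Finset.sum_congr rfl fun i hi => (keyi i hi).2, Finset.sum_const]
        rw [if_pos hT, nsmul_eq_mul]
        field_simp
    · have h0 : (fun ω => (∏ i, (if i ∈ T then a i ω else 1 - a i ω)) *
          (if T.Nonempty then (∑ i ∈ T, (f (x i ω) + ε i ω)) / (T.card : ℝ) else 0))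
          = fun _ => (0 : ℝ) := by
        funext ω; rw [if_neg hT, mul_zero]
      rw [h0, if_neg hT]
      exact ⟨integrable_const 0, by simp⟩
  -- rewrite the integrand pointwise
  have hpt : (fun ω => if 0 < ∑ i, a i ω then
        (∑ i, (f (x i ω) + ε i ω) * a i ω) / (∑ i, a i ω) else 0)
      = fun ω => ∑ T : Finset (Fin n), (∏ i, (if i ∈ T then a i ω else 1 - a i ω)) *
          (if T.Nonempty then (∑ i ∈ T, (f (x i ω) + ε i ω)) / (T.card : ℝ) else 0) := by
    funext ω
    exact gnw_aux_pointwise (fun i => a i ω) (fun i => f (x i ω) + ε i ω)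
      (fun i => hbin i ω)
  rw [hpt, integral_finset_sum Finset.univ fun T _ => (main T).1]
  rw [Finset.sum_congr rfl fun T _ => (main T).2]
  -- final combinatorics
  have hW : ∀ T : Finset (Fin n), (∏ j, (if j ∈ T then c else 1 - c))
      = c ^ T.card * (1 - c) ^ (Finset.univ \ T).card := by
    intro T
    rw [Finset.prod_ite]
    rw [Finset.prod_const, Finset.prod_const]
    congr 2
    · simp [Finset.filter_mem_eq_inter]
    · rw [Finset.filter_not, Finset.filter_mem_eq_inter, Finset.univ_inter]
  have hsum : ∑ T : Finset (Fin n), (∏ j, (if j ∈ T then c else 1 - c)) = 1 := by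
    have h := Finset.prod_add (fun _ : Fin n => c) (fun _ : Fin n => 1 - c) Finset.univ
    simp only [add_sub_cancel, Finset.prod_const, one_pow, Finset.powerset_univ] at h
    rw [Finset.sum_congr rfl fun T _ => hW T]
    exact h.symm
  have hW0 : (∏ j, (if j ∈ (∅ : Finset (Fin n)) then c else 1 - c)) = (1 - c) ^ n := by
    simp [Finset.prod_const]
  rw [← Finset.sum_erase (f := fun T : Finset (Fin n) =>
      if T.Nonempty then S * ∏ j, (if j ∈ T then c else 1 - c) else 0) Finset.univ
      (a := (∅ : Finset (Fin n))) (by simp)]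
  rw [Finset.sum_congr rfl (fun T hT => by
    rw [if_pos (Finset.nonempty_iff_ne_empty.mpr (Finset.mem_erase.mp hT).1)])]
  have htot : ∑ T : Finset (Fin n), S * ∏ j, (if j ∈ T then c else 1 - c) = S := by
    rw [← Finset.mul_sum, hsum, mul_one]
  rw [Finset.sum_erase_eq_sub (f := fun T : Finset (Fin n) =>
      S * ∏ j, (if j ∈ T then c else 1 - c)) (Finset.mem_univ (∅ : Finset (Fin n)))]
  rw [htot, hW0]
  ring
end

section
/- In the setting of the GNW estimator (x_i, ε_i, a_i i.i.d., a_i Bernoulli with mean k(x,x_i) given x_i, y_i = f(x_i)+ε_i, c(x) = E[a_1] > 0, S = S(f,x) = E[f(x_1)a_1]/c(x)), with Z = 1[∑ a_i > 0], one has E[(f̂(x) - S·Z)²] = ∑_{i=1}^n E[(y_i - S)² a_i R_i²], where R_i = 1/(1 + ∑_{j≠i} a_j). -/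
open MeasureTheory ProbabilityTheory

/-- The Graphical Nadaraya–Watson estimator: average of the labels
`y_i = f(x_i) + ε_i` over the neighbors (`a_i = 1`), or `0` if there are none. -/
noncomputable def gnwEst {Ω : Type*} {d n : ℕ}
    (x : Fin n → Ω → EuclideanSpace ℝ (Fin d)) (ε a : Fin n → Ω → ℝ)
    (f : EuclideanSpace ℝ (Fin d) → ℝ) (ω : Ω) : ℝ :=
  if 0 < ∑ i, a i ω then (∑ i, (f (x i ω) + ε i ω) * a i ω) / (∑ i, a i ω) else 0

/-! On `{∑ a > 0}` one has `a_i R_i = a_i / ∑ a`, so `f̂(x) - S Z = ∑_i (y_i - S) a_i R_i`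
pointwise. In the square, a cross term `i ≠ j` equals `(y_i - S) a_i · (y_j - S) a_j R_{ij}²` with
`R_{ij} = 1 / (2 + ∑_{l ≠ i, j} a_l)`: the second factor depends only on the samples other than
`i`, so by independence the expectation factors through `E[(y_i - S) a_i]`, which vanishes by the
choice of `S`. -/

open Finset
open scoped ENNReal

section LeaveOneOut

variable {ι : Type*} [Fintype ι] [DecidableEq ι]

noncomputable def leaveOneOutInv (a : ι → ℝ) (i : ι) : ℝ := (1 + ∑ j ∈ univ.erase i, a j)⁻¹

noncomputable def leaveTwoOutInv (a : ι → ℝ) (i j : ι) : ℝ :=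
  (2 + ∑ l ∈ (univ.erase i).erase j, a l)⁻¹

variable {a : ι → ℝ}

lemma leaveOneOutInv_nonneg (ha : ∀ j, 0 ≤ a j) (i : ι) : 0 ≤ leaveOneOutInv a i :=
  inv_nonneg.2 (add_nonneg zero_le_one (sum_nonneg fun j _ => ha j))

lemma leaveOneOutInv_le_one (ha : ∀ j, 0 ≤ a j) (i : ι) : leaveOneOutInv a i ≤ 1 :=
  inv_le_one_of_one_le₀ (le_add_of_nonneg_right (sum_nonneg fun j _ => ha j))

lemma leaveOneOutInv_of_eq_one {i : ι} (hi : a i = 1) : leaveOneOutInv a i = (∑ j, a j)⁻¹ := by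
  rw [leaveOneOutInv, ← add_sum_erase _ _ (mem_univ i), hi]

lemma leaveOneOutInv_of_eq_one_of_ne {i j : ι} (hj : a j = 1) (hij : i ≠ j) :
    leaveOneOutInv a i = leaveTwoOutInv a i j := by
  rw [leaveOneOutInv, leaveTwoOutInv, ← add_sum_erase _ _ (mem_erase.2 ⟨hij.symm, mem_univ j⟩),
    hj, ← add_assoc, one_add_one_eq_two]

lemma leaveTwoOutInv_comm (i j : ι) : leaveTwoOutInv a i j = leaveTwoOutInv a j i := by
  rw [leaveTwoOutInv, leaveTwoOutInv, erase_right_comm]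

lemma mul_leaveOneOutInv_mul_mul_leaveOneOutInv (hbin : ∀ j, a j = 0 ∨ a j = 1) {i j : ι}
    (hij : i ≠ j) :
    a i * leaveOneOutInv a i * (a j * leaveOneOutInv a j)
      = a i * (a j * leaveTwoOutInv a i j ^ 2) := by
  rcases hbin i with hi | hi
  · simp [hi]
  rcases hbin j with hj | hj
  · simp [hj]
  rw [leaveOneOutInv_of_eq_one_of_ne hj hij, leaveOneOutInv_of_eq_one_of_ne hi hij.symm,
    leaveTwoOutInv_comm]
  ring

lemma weightedMean_sub_eq_sum_mul_leaveOneOutInv (hbin : ∀ j, a j = 0 ∨ a j = 1)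
    (y : ι → ℝ) (S : ℝ) :
    (if 0 < ∑ i, a i then (∑ i, y i * a i) / ∑ i, a i else 0)
        - S * (if 0 < ∑ i, a i then 1 else 0)
      = ∑ i, (y i - S) * a i * leaveOneOutInv a i := by
  have ha : ∀ j, 0 ≤ a j := fun j => by rcases hbin j with h | h <;> simp [h]
  split_ifs with hpos
  · have hterm : ∀ i, (y i - S) * a i * leaveOneOutInv a i = (y i - S) * a i / ∑ j, a j := by
      intro i
      rcases hbin i with h | h
      · simp [h]
      · rw [leaveOneOutInv_of_eq_one h, div_eq_mul_inv]
    have hsplit : ∑ i, (y i - S) * a i = ∑ i, y i * a i - S * ∑ i, a i := by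
      simp only [sub_mul, sum_sub_distrib, mul_sum]
    rw [sum_congr rfl fun i _ => hterm i, ← sum_div, hsplit, sub_div, mul_div_assoc,
      div_self hpos.ne', mul_one]
  · have hzero : ∀ i, a i = 0 := fun i =>
      (sum_eq_zero_iff_of_nonneg fun j _ => ha j).1
        (le_antisymm (not_lt.1 hpos) (sum_nonneg fun j _ => ha j)) i (mem_univ i)
    simp [hzero]

end LeaveOneOut

section Independence

variable {Ω ι : Type*} {β : ι → Type*} [∀ i, MeasurableSpace (β i)]

lemma measurable_biSup_comap (X : ∀ i, Ω → β i) {s : Set ι} {l : ι} (hl : l ∈ s) :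
    Measurable[⨆ i ∈ s, MeasurableSpace.comap (X i) inferInstance] (X l) :=
  measurable_iff_comap_le.2 (le_iSup₂_of_le l hl le_rfl)

lemma ProbabilityTheory.iIndepFun.indepFun_of_measurable_biSup [MeasurableSpace Ω]
    {μ : Measure Ω} {X : ∀ i, Ω → β i} (hX : iIndepFun X μ)
    (hXm : ∀ i, Measurable (X i)) {s t : Set ι} (hst : Disjoint s t)
    {γ δ : Type*} [MeasurableSpace γ] [MeasurableSpace δ] {Y : Ω → γ} {Z : Ω → δ}
    (hY : Measurable[⨆ i ∈ s, MeasurableSpace.comap (X i) inferInstance] Y)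
    (hZ : Measurable[⨆ i ∈ t, MeasurableSpace.comap (X i) inferInstance] Z) :
    IndepFun Y Z μ := by
  rw [IndepFun_iff_Indep]
  exact indep_of_indep_of_le_right
    (indep_of_indep_of_le_left
      (indep_iSup_of_disjoint (fun i => (hXm i).comap_le) hX.iIndep hst) hY.comap_le)
    hZ.comap_le

end Independence

lemma integral_sq_sum_of_pairwise_integral_mul_eq_zero {Ω ι : Type*} [MeasurableSpace Ω]
    {μ : Measure Ω} [Fintype ι] {T : ι → Ω → ℝ} (hT : ∀ i, MemLp (T i) 2 μ)
    (horth : Pairwise fun i j => ∫ ω, T i ω * T j ω ∂μ = 0) :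
    ∫ ω, (∑ i, T i ω) ^ 2 ∂μ = ∑ i, ∫ ω, T i ω ^ 2 ∂μ := by
  classical
  have hint : ∀ i j, Integrable (fun ω => T i ω * T j ω) μ :=
    fun i j => (hT i).integrable_mul (hT j)
  simp_rw [sq, sum_mul_sum]
  rw [integral_finsetSum _ fun i _ => integrable_finsetSum _ fun j _ => hint i j]
  refine sum_congr rfl fun i _ => ?_
  rw [integral_finsetSum _ fun j _ => hint i j]
  exact sum_eq_single_of_mem i (mem_univ i) fun j _ hji => horth hji.symm

section GNW

variable {Ω E ι : Type*} [Fintype ι] [DecidableEq ι]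

noncomputable def gnwSummand (x : ι → Ω → E) (ε a : ι → Ω → ℝ) (f : E → ℝ) (S : ℝ) (i : ι)
    (ω : Ω) : ℝ :=
  (f (x i ω) + ε i ω - S) * a i ω * leaveOneOutInv (fun j => a j ω) i

lemma gnwSummand_sq {x : ι → Ω → E} {ε a : ι → Ω → ℝ} (hbin : ∀ i ω, a i ω = 0 ∨ a i ω = 1)
    (f : E → ℝ) (S : ℝ) (i : ι) (ω : Ω) :
    gnwSummand x ε a f S i ω ^ 2
      = (f (x i ω) + ε i ω - S) ^ 2 * a i ω * leaveOneOutInv (fun j => a j ω) i ^ 2 := by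
  rcases hbin i ω with h | h <;> simp only [gnwSummand, h] <;> ring

variable [MeasurableSpace Ω] {μ : Measure Ω} [MeasurableSpace E]

lemma integral_label_sub_mul_eq_zero [IsFiniteMeasure μ] {x x₀ : Ω → E} {ε ε₀ a a₀ : Ω → ℝ}
    {f : E → ℝ} (hfm : Measurable f)
    (hid : IdentDistrib (fun ω => (x ω, ε ω, a ω)) (fun ω => (x₀ ω, ε₀ ω, a₀ ω)) μ μ)
    (hnoise : IndepFun (fun ω => (x ω, a ω)) ε μ) (hε : Integrable ε μ)
    (hε0 : ∫ ω, ε ω ∂μ = 0) (hfa : Integrable (fun ω => f (x ω) * a ω) μ)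
    (ha : Integrable a μ) (hc : ∫ ω, a₀ ω ∂μ ≠ 0) :
    ∫ ω, (f (x ω) + ε ω - (∫ ω, f (x₀ ω) * a₀ ω ∂μ) / ∫ ω, a₀ ω ∂μ) * a ω ∂μ = 0 := by
  set S := (∫ ω, f (x₀ ω) * a₀ ω ∂μ) / ∫ ω, a₀ ω ∂μ
  have hεa : IndepFun ε a μ := hnoise.symm.comp measurable_id measurable_snd
  have hfa_eq : ∫ ω, f (x ω) * a ω ∂μ = ∫ ω, f (x₀ ω) * a₀ ω ∂μ :=
    (hid.comp (u := fun p : E × ℝ × ℝ => f p.1 * p.2.2) (by fun_prop)).integral_eq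
  have ha_eq : ∫ ω, a ω ∂μ = ∫ ω, a₀ ω ∂μ := (hid.comp measurable_snd.snd).integral_eq
  have hεa_eq : ∫ ω, ε ω * a ω ∂μ = 0 := by
    have h := hεa.integral_mul_eq_mul_integral hε.aestronglyMeasurable ha.aestronglyMeasurable
    rw [hε0, zero_mul] at h
    exact h
  have hsplit : (fun ω => (f (x ω) + ε ω - S) * a ω)
      = fun ω => f (x ω) * a ω + ε ω * a ω - S * a ω := by
    funext ω; ring
  have hεa_int : Integrable (fun ω => ε ω * a ω) μ := hεa.integrable_mul hε ha
  have hsum_int : Integrable (fun ω => f (x ω) * a ω + ε ω * a ω) μ := hfa.add hεa_int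
  rw [hsplit, integral_sub hsum_int (ha.const_mul S), integral_add hfa hεa_int,
    integral_const_mul, hfa_eq, hεa_eq, ha_eq,
    div_mul_cancel₀ _ hc, add_zero, sub_self]

lemma memLp_gnwSummand [IsFiniteMeasure μ] {x : ι → Ω → E} {ε a : ι → Ω → ℝ} {f : E → ℝ}
    {B : ℝ} (hfm : Measurable f) (hB : ∀ z, |f z| ≤ B) (hxm : ∀ i, Measurable (x i))
    (ham : ∀ i, Measurable (a i)) (hbin : ∀ i ω, a i ω = 0 ∨ a i ω = 1) (S : ℝ) {i : ι}
    (hε : MemLp (ε i) 2 μ) :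
    MemLp (gnwSummand x ε a f S i) 2 μ := by
  have hfx : MemLp (fun ω => f (x i ω)) 2 μ :=
    MemLp.of_bound (hfm.comp (hxm i)).aestronglyMeasurable B (ae_of_all _ fun ω => hB _)
  have hy : MemLp (fun ω => f (x i ω) + ε i ω - S) 2 μ := (hfx.add hε).sub (memLp_const S)
  have hw : MemLp (fun ω => a i ω * leaveOneOutInv (fun j => a j ω) i) ∞ μ := by
    refine memLp_top_of_bound ((ham i).mul
      (measurable_const.add (measurable_sum _ fun j _ => ham j)).inv).aestronglyMeasurable
      1 (ae_of_all _ fun ω => ?_)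
    have ha : ∀ j, 0 ≤ a j ω := fun j => by rcases hbin j ω with h | h <;> simp [h]
    rcases hbin i ω with h | h
    · simp [h]
    · rw [h, one_mul, Real.norm_of_nonneg (leaveOneOutInv_nonneg ha i)]
      exact leaveOneOutInv_le_one ha i
  convert hw.mul hy (r := 2) using 1
  exact funext fun ω => mul_assoc _ _ _

lemma integral_gnwSummand_mul_eq_zero {x : ι → Ω → E} {ε a : ι → Ω → ℝ} {f : E → ℝ} {S : ℝ}
    (hfm : Measurable f) (hxm : ∀ i, Measurable (x i)) (hεm : ∀ i, Measurable (ε i))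
    (ham : ∀ i, Measurable (a i)) (hindep : iIndepFun (fun i ω => (x i ω, ε i ω, a i ω)) μ)
    (hbin : ∀ i ω, a i ω = 0 ∨ a i ω = 1)
    (hmean : ∀ i, ∫ ω, (f (x i ω) + ε i ω - S) * a i ω ∂μ = 0) {i j : ι} (hij : i ≠ j) :
    ∫ ω, gnwSummand x ε a f S i ω * gnwSummand x ε a f S j ω ∂μ = 0 := by
  set X : ι → Ω → E × ℝ × ℝ := fun l ω => (x l ω, ε l ω, a l ω)
  have hXm : ∀ l, Measurable (X l) := fun l => (hxm l).prodMk ((hεm l).prodMk (ham l))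
  have hle : (⨆ l ∈ ({i}ᶜ : Set ι), MeasurableSpace.comap (X l) inferInstance) ≤ ‹_› :=
    iSup₂_le fun l _ => (hXm l).comap_le
  set φ : E × ℝ × ℝ → ℝ := fun p => (f p.1 + p.2.1 - S) * p.2.2
  have hφ : Measurable φ := by fun_prop
  set H : Ω → ℝ := fun ω => φ (X j ω) * leaveTwoOutInv (fun l => a l ω) i j ^ 2
  have hHm : Measurable[⨆ l ∈ ({i}ᶜ : Set ι), MeasurableSpace.comap (X l) inferInstance] H := by
    have hXl : ∀ l ≠ i,
        Measurable[⨆ l ∈ ({i}ᶜ : Set ι), MeasurableSpace.comap (X l) inferInstance] (X l) :=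
      fun l hl => measurable_biSup_comap X hl
    refine (hφ.comp (hXl j hij.symm)).mul ((measurable_const.add
      (measurable_sum _ fun l hl => (hXl l ?_).snd.snd)).inv.pow_const 2)
    exact ne_of_mem_erase (mem_of_mem_erase hl)
  have hind : IndepFun (φ ∘ X i) H μ :=
    hindep.indepFun_of_measurable_biSup hXm (s := {i}) (t := {i}ᶜ) disjoint_compl_right
      (hφ.comp (measurable_biSup_comap X rfl)) hHm
  have hfac : ∀ ω, gnwSummand x ε a f S i ω * gnwSummand x ε a f S j ω = φ (X i ω) * H ω := by
    intro ω
    have h := mul_leaveOneOutInv_mul_mul_leaveOneOutInv (fun l => hbin l ω) hij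
    simp only [gnwSummand, φ, X, H]
    linear_combination (f (x i ω) + ε i ω - S) * (f (x j ω) + ε j ω - S) * h
  rw [integral_congr_ae (ae_of_all _ hfac)]
  have h := hind.integral_mul_eq_mul_integral (hφ.comp (hXm i)).aestronglyMeasurable
    (hHm.mono hle le_rfl).aestronglyMeasurable
  have h0 : ∫ ω, (φ ∘ X i) ω ∂μ = 0 := hmean i
  exact h.trans (by rw [h0, zero_mul])

end GNW

theorem gnw_variance_proxy_decomposition_general {Ω : Type*} [MeasurableSpace Ω]
    (μ : Measure Ω) [IsProbabilityMeasure μ]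
    {d n : ℕ} (hn : 0 < n)
    (x : Fin n → Ω → EuclideanSpace ℝ (Fin d)) (ε a : Fin n → Ω → ℝ)
    (hxm : ∀ i, Measurable (x i)) (hεm : ∀ i, Measurable (ε i))
    (ham : ∀ i, Measurable (a i))
    (hindep : ProbabilityTheory.iIndepFun
      (fun i ω => (x i ω, ε i ω, a i ω)) μ)
    (hid : ∀ i, ProbabilityTheory.IdentDistrib (fun ω => (x i ω, ε i ω, a i ω))
      (fun ω => (x ⟨0, hn⟩ ω, ε ⟨0, hn⟩ ω, a ⟨0, hn⟩ ω)) μ μ)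
    (hbin : ∀ i ω, a i ω = 0 ∨ a i ω = 1)
    (hnoise : ∀ i, ProbabilityTheory.IndepFun (fun ω => (x i ω, a i ω)) (ε i) μ)
    (hεL2 : ∀ i, MemLp (ε i) 2 μ)
    (hεmean : ∀ i, ∫ ω, ε i ω ∂μ = 0)
    (f : EuclideanSpace ℝ (Fin d) → ℝ) (hfm : Measurable f)
    (B : ℝ) (hB : ∀ z, |f z| ≤ B)
    (c : ℝ) (hc : c = ∫ ω, a ⟨0, hn⟩ ω ∂μ) (hcpos : 0 < c)
    (S : ℝ) (hS : S = (∫ ω, f (x ⟨0, hn⟩ ω) * a ⟨0, hn⟩ ω ∂μ) / c) :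
    ∫ ω, (gnwEst x ε a f ω - S * (if 0 < ∑ i, a i ω then (1 : ℝ) else 0)) ^ 2 ∂μ
      = ∑ i, ∫ ω, ((f (x i ω) + ε i ω) - S) ^ 2 * a i ω
          * ((1 + ∑ j ∈ Finset.univ.erase i, a j ω)⁻¹) ^ 2 ∂μ := by
  subst hc
  have ha_int : ∀ i, Integrable (a i) μ := fun i =>
    .of_bound (ham i).aestronglyMeasurable 1 (ae_of_all _ fun ω => by
      rcases hbin i ω with h | h <;> simp [h])
  have hfa_int : ∀ i, Integrable (fun ω => f (x i ω) * a i ω) μ := fun i =>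
    (ha_int i).bdd_mul (hfm.comp (hxm i)).aestronglyMeasurable (ae_of_all _ fun ω => hB _)
  have hmean : ∀ i, ∫ ω, (f (x i ω) + ε i ω - S) * a i ω ∂μ = 0 := fun i => hS ▸
    integral_label_sub_mul_eq_zero hfm (hid i) (hnoise i) ((hεL2 i).integrable one_le_two)
      (hεmean i) (hfa_int i) (ha_int i) hcpos.ne'
  have hsum : ∀ ω, gnwEst x ε a f ω - S * (if 0 < ∑ i, a i ω then (1 : ℝ) else 0)
      = ∑ i, gnwSummand x ε a f S i ω := fun ω =>
    weightedMean_sub_eq_sum_mul_leaveOneOutInv (fun i => hbin i ω) _ _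
  simp_rw [hsum]
  rw [integral_sq_sum_of_pairwise_integral_mul_eq_zero
    (fun i => memLp_gnwSummand hfm hB hxm ham hbin S (hεL2 i))
    (fun i j hij => integral_gnwSummand_mul_eq_zero hfm hxm hεm ham hindep hbin hmean hij)]
  exact sum_congr rfl fun i _ => integral_congr_ae (ae_of_all _ (gnwSummand_sq hbin f S i))

/-- Decomposition of the GNW variance proxy: with `Z = 1[sum a_i > 0]` and
`R_i = 1/(1 + sum_{j ≠ i} a_j)`, one has
`E[(fhat(x) - S*Z)^2] = sum_i E[(y_i - S)^2 a_i R_i^2]`. -/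
theorem gnw_variance_proxy_decomposition {Ω : Type*} [MeasurableSpace Ω]
    (μ : Measure Ω) [IsProbabilityMeasure μ]
    {d n : ℕ} (hn : 0 < n)
    (x : Fin n → Ω → EuclideanSpace ℝ (Fin d)) (ε a : Fin n → Ω → ℝ)
    (hxm : ∀ i, Measurable (x i)) (hεm : ∀ i, Measurable (ε i))
    (ham : ∀ i, Measurable (a i))
    (hindep : ProbabilityTheory.iIndepFun
      (fun i ω => (x i ω, ε i ω, a i ω)) μ)
    (hid : ∀ i, ProbabilityTheory.IdentDistrib (fun ω => (x i ω, ε i ω, a i ω))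
      (fun ω => (x ⟨0, hn⟩ ω, ε ⟨0, hn⟩ ω, a ⟨0, hn⟩ ω)) μ μ)
    (hbin : ∀ i ω, a i ω = 0 ∨ a i ω = 1)
    (hnoise : ∀ i, ProbabilityTheory.IndepFun (fun ω => (x i ω, a i ω)) (ε i) μ)
    (hεint : ∀ i, Integrable (ε i) μ)
    (hεL2 : ∀ i, MemLp (ε i) 2 μ)
    (hεmean : ∀ i, ∫ ω, ε i ω ∂μ = 0)
    (k : EuclideanSpace ℝ (Fin d) → ℝ)
    (hcond : ∀ i, μ[a i|MeasurableSpace.comap (x i) inferInstance]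
      =ᵐ[μ] fun ω => k (x i ω))
    (f : EuclideanSpace ℝ (Fin d) → ℝ) (hfm : Measurable f)
    (B : ℝ) (hB : ∀ z, |f z| ≤ B)
    (c : ℝ) (hc : c = ∫ ω, a ⟨0, hn⟩ ω ∂μ) (hcpos : 0 < c)
    (S : ℝ) (hS : S = (∫ ω, f (x ⟨0, hn⟩ ω) * a ⟨0, hn⟩ ω ∂μ) / c) :
    ∫ ω, (gnwEst x ε a f ω - S * (if 0 < ∑ i, a i ω then (1 : ℝ) else 0)) ^ 2 ∂μ
      = ∑ i, ∫ ω, ((f (x i ω) + ε i ω) - S) ^ 2 * a i ω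
          * ((1 + ∑ j ∈ Finset.univ.erase i, a j ω)⁻¹) ^ 2 ∂μ :=
  gnw_variance_proxy_decomposition_general μ hn x ε a hxm hεm ham hindep hid hbin hnoise hεL2 hεmean
    f hfm B hB c hc hcpos S hS
end

section
/- Under the GNW model with ‖f‖_∞ ≤ B and noise variance ≤ σ², let b(x) = S(f,x) - f(x) and Bias = E[f̂_GNW(x)] - f(x). Then 0 ≤ (b(x) - Bias)² ≤ B² exp(-2d(x)), and similarly 0 ≤ v(x) - Var[f̂_GNW(x)] ≤ B² exp(-2d(x)), where d(x) = n c(x). -/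
open MeasureTheory ProbabilityTheory

open Finset

/-! Write the estimator as `∑ᵢ yᵢ wᵢ` with `yᵢ = f(xᵢ) + εᵢ` and `wᵢ = aᵢ / ∑ⱼ aⱼ`. Since the
edges are binary, `wᵢ = aᵢ (1 + ∑_{j ≠ i} aⱼ)⁻¹`, and this leave-one-out denominator is
independent of `(xᵢ, εᵢ, aᵢ)`. Hence `E[yᵢ wᵢ] = E[yᵢ aᵢ] E[(1 + ∑_{j ≠ i} aⱼ)⁻¹] = S E[wᵢ]`,
and summing over `i` gives `E f̂ = S P(∑ⱼ aⱼ > 0) = S (1 - (1 - c)ⁿ)`. Both gaps equal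
`(S - E f̂)² = S² (1 - c)²ⁿ ≤ B² e^{-2nc}`, the second one by the decomposition
`E(f̂ - S)² = Var f̂ + (E f̂ - S)²`. -/

section WeightIdentities

variable {ι : Type*} [Fintype ι] {a : ι → ℝ}

theorem mul_inv_one_add_sum_erase_eq_div [DecidableEq ι] (ha : ∀ j, a j = 0 ∨ a j = 1)
    (i : ι) : a i * (1 + ∑ j ∈ univ.erase i, a j)⁻¹ = a i / ∑ j, a j := by
  rcases ha i with h | h
  · simp [h]
  · rw [← add_sum_erase _ _ (mem_univ i), h, div_eq_mul_inv]

theorem sum_div_sum_eq_one_sub_prod (ha : ∀ j, a j = 0 ∨ a j = 1) :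
    ∑ i, a i / ∑ j, a j = 1 - ∏ i, (1 - a i) := by
  by_cases h : ∃ i, a i = 1
  · obtain ⟨i, hi⟩ := h
    have hpos : 0 < ∑ j, a j := by
      refine lt_of_lt_of_le (by simp [hi])
        (single_le_sum (f := a) (fun j _ => ?_) (mem_univ i))
      rcases ha j with h | h <;> simp [h]
    rw [← sum_div, div_self hpos.ne', prod_eq_zero (mem_univ i) (by simp [hi]), sub_zero]
  · push Not at h
    simp [fun i => (ha i).resolve_right (h i)]

theorem abs_sum_mul_div_sum_le (ha : ∀ j, 0 ≤ a j) (y : ι → ℝ) :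
    |∑ i, y i * (a i / ∑ j, a j)| ≤ ∑ i, |y i| := by
  refine (abs_sum_le_sum_abs _ _).trans (sum_le_sum fun i _ => ?_)
  rw [abs_mul, abs_of_nonneg (div_nonneg (ha i) (sum_nonneg fun j _ => ha j))]
  exact mul_le_of_le_one_right (abs_nonneg _) <|
    div_le_one_of_le₀ (single_le_sum (fun j _ => ha j) (mem_univ i)) (sum_nonneg fun j _ => ha j)

end WeightIdentities

section Probability

variable {Ω ι : Type*} [MeasurableSpace Ω] {μ : Measure Ω} [Fintype ι]

theorem ProbabilityTheory.iIndepFun.integral_mul_inv_one_add_sum_erase [DecidableEq ι]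
    {β : Type*} [MeasurableSpace β] {Z : ι → Ω → β} (hZ : ∀ i, Measurable (Z i))
    (hind : iIndepFun Z μ)
    {φ ψ : β → ℝ} (hφ : Measurable φ) (hψ : Measurable ψ) (i : ι) :
    ∫ ω, φ (Z i ω) * (1 + ∑ j ∈ univ.erase i, ψ (Z j ω))⁻¹ ∂μ
      = (∫ ω, φ (Z i ω) ∂μ) * ∫ ω, (1 + ∑ j ∈ univ.erase i, ψ (Z j ω))⁻¹ ∂μ := by
  have hpairs : iIndepFun (fun j ω => (φ (Z j ω), ψ (Z j ω))) μ :=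
    hind.comp (fun _ z => (φ z, ψ z)) fun _ => hφ.prodMk hψ
  have hindep := (hpairs.indepFun_finsetSum_of_notMem (fun j => (hφ.comp (hZ j)).prodMk
    (hψ.comp (hZ j))) (notMem_erase i univ)).symm.comp measurable_fst
    (show Measurable fun p : ℝ × ℝ => (1 + p.2)⁻¹ by fun_prop)
  simp only [Function.comp_def, Finset.sum_apply, Prod.snd_sum] at hindep
  exact hindep.integral_fun_mul_eq_mul_integral (hφ.comp (hZ i)).aestronglyMeasurable
    (measurable_const.add (measurable_sum _ fun j _ => hψ.comp (hZ j))).inv.aestronglyMeasurable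

theorem integral_sum_mul_div_sum {Y A : ι → Ω → ℝ} (hY : ∀ i, Measurable (Y i))
    (hA : ∀ i, Measurable (A i)) (hind : iIndepFun (fun i ω => (Y i ω, A i ω)) μ)
    (hbin : ∀ i ω, A i ω = 0 ∨ A i ω = 1)
    (hYA : ∀ i, Integrable (fun ω => Y i ω * A i ω) μ)
    {s : ℝ} (hs : ∀ i, ∫ ω, Y i ω * A i ω ∂μ = s * ∫ ω, A i ω ∂μ) :
    ∫ ω, ∑ i, Y i ω * (A i ω / ∑ j, A j ω) ∂μ
      = s * (1 - ∏ i, (1 - ∫ ω, A i ω ∂μ)) := by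
  classical
  have := hind.isProbabilityMeasure
  set N : ι → Ω → ℝ := fun i ω => (1 + ∑ j ∈ univ.erase i, A j ω)⁻¹
  have hA0 : ∀ i ω, 0 ≤ A i ω := fun i ω => by rcases hbin i ω with h | h <;> simp [h]
  have hNm : ∀ i, Measurable (N i) := fun i =>
    (measurable_const.add (measurable_sum _ fun j _ => hA j)).inv
  have hNbdd : ∀ i, ∀ᵐ ω ∂μ, ‖N i ω‖ ≤ 1 := fun i => ae_of_all _ fun ω => by
    have hden : 1 ≤ 1 + ∑ j ∈ univ.erase i, A j ω :=
      le_add_of_nonneg_right (sum_nonneg fun j _ => hA0 j ω)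
    rw [Real.norm_of_nonneg (inv_nonneg.2 (zero_le_one.trans hden))]
    exact inv_le_one_of_one_le₀ hden
  have hAint : ∀ i, Integrable (A i) μ := fun i =>
    .of_bound (hA i).aestronglyMeasurable 1 (ae_of_all _ fun ω => by
      rcases hbin i ω with h | h <;> simp [h])
  have hfactor : ∀ φ : ℝ × ℝ → ℝ, Measurable φ → ∀ i,
      ∫ ω, φ (Y i ω, A i ω) * N i ω ∂μ = (∫ ω, φ (Y i ω, A i ω) ∂μ) * ∫ ω, N i ω ∂μ :=
    fun φ hφ => hind.integral_mul_inv_one_add_sum_erase (fun i => (hY i).prodMk (hA i)) hφ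
      measurable_snd
  have hweight : ∀ i ω, A i ω / ∑ j, A j ω = A i ω * N i ω := fun i ω =>
    (mul_inv_one_add_sum_erase_eq_div (hbin · ω) i).symm
  calc ∫ ω, ∑ i, Y i ω * (A i ω / ∑ j, A j ω) ∂μ
      = ∫ ω, ∑ i, (Y i ω * A i ω) * N i ω ∂μ := by simp only [hweight, mul_assoc]
    _ = ∑ i, ∫ ω, (Y i ω * A i ω) * N i ω ∂μ :=
        integral_finsetSum _ fun i _ =>
          (hYA i).mul_bdd (hNm i).aestronglyMeasurable (hNbdd i)
    _ = ∑ i, s * ((∫ ω, A i ω ∂μ) * ∫ ω, N i ω ∂μ) := sum_congr rfl fun i _ => by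
        rw [← mul_assoc, ← hs i]
        exact hfactor (fun p => p.1 * p.2) (by fun_prop) i
    _ = s * ∑ i, ∫ ω, A i ω / ∑ j, A j ω ∂μ := by
        simp only [hweight, hfactor Prod.snd measurable_snd, mul_sum]
    _ = s * ∫ ω, (1 - ∏ i, (1 - A i ω)) ∂μ := by
        rw [← integral_finsetSum _ fun i _ => ?_]
        · simp only [sum_div_sum_eq_one_sub_prod (hbin · _)]
        · simpa only [hweight] using
            (hAint i).mul_bdd (hNm i).aestronglyMeasurable (hNbdd i)
    _ = s * (1 - ∏ i, (1 - ∫ ω, A i ω ∂μ)) := by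
        have hprod : Integrable (fun ω => ∏ i, (1 - A i ω)) μ :=
          .of_bound (by fun_prop) 1 (ae_of_all _ fun ω => by
            rw [norm_prod]
            exact prod_le_one (fun _ _ => norm_nonneg _) fun i _ => by
              rcases hbin i ω with h | h <;> simp [h])
        have hindA : iIndepFun (fun i ω => 1 - A i ω) μ :=
          hind.comp (fun _ p => 1 - p.2) fun _ => by fun_prop
        rw [integral_sub (integrable_const 1) hprod,
          hindA.integral_fun_prod_eq_prod_integral fun i => by fun_prop]
        simp only [integral_sub (integrable_const 1) (hAint _), integral_const, probReal_univ,
          one_smul]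

end Probability

section Moments

variable {Ω : Type*} [MeasurableSpace Ω] {μ : Measure Ω}

theorem integral_sub_sq_eq_variance_add_sq [IsProbabilityMeasure μ] {X : Ω → ℝ}
    (hX : MemLp X 2 μ) (s : ℝ) :
    ∫ ω, (X ω - s) ^ 2 ∂μ = Var[X; μ] + (μ[X] - s) ^ 2 := by
  have hXs : MemLp (fun ω => X ω - s) 2 μ := hX.sub (memLp_const s)
  have h := variance_eq_sub hXs
  rw [variance_sub_const hX.aestronglyMeasurable] at h
  rw [h, integral_sub (hX.integrable one_le_two) (integrable_const s)]
  simp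

theorem abs_integral_mul_div_integral_le {g A : Ω → ℝ} {B : ℝ} (hgB : ∀ ω, |g ω| ≤ B)
    (hA : Integrable A μ) (hA0 : ∀ ω, 0 ≤ A ω) (hApos : 0 < ∫ ω, A ω ∂μ) :
    |(∫ ω, g ω * A ω ∂μ) / ∫ ω, A ω ∂μ| ≤ B := by
  rw [abs_div, abs_of_pos hApos, div_le_iff₀ hApos, ← integral_const_mul B (fun ω => A ω)]
  refine norm_integral_le_of_norm_le (f := fun ω => g ω * A ω) (hA.const_mul B)
    (ae_of_all _ fun ω => ?_)
  rw [Real.norm_eq_abs, abs_mul, abs_of_nonneg (hA0 ω)]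
  exact mul_le_mul_of_nonneg_right (hgB ω) (hA0 ω)

end Moments

theorem sq_mul_one_sub_pow_le {s B c : ℝ} (hs : |s| ≤ B) (hc : c ≤ 1) (n : ℕ) :
    (s * (1 - c) ^ n) ^ 2 ≤ B ^ 2 * Real.exp (-(2 * (n * c))) := by
  have hc' : 0 ≤ (1 - c) ^ n := pow_nonneg (sub_nonneg.2 hc) n
  have hpow : (1 - c) ^ n ≤ Real.exp (-(n * c)) :=
    calc (1 - c) ^ n ≤ Real.exp (-c) ^ n :=
          pow_le_pow_left₀ (sub_nonneg.2 hc) (Real.one_sub_le_exp_neg c) n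
      _ = Real.exp (-(n * c)) := by rw [← Real.exp_nat_mul]; ring_nf
  have habs : |s * (1 - c) ^ n| ≤ B * Real.exp (-(n * c)) := by
    rw [abs_mul, abs_of_nonneg hc']
    exact mul_le_mul hs hpow hc' ((abs_nonneg s).trans hs)
  calc (s * (1 - c) ^ n) ^ 2 ≤ (B * Real.exp (-(n * c))) ^ 2 :=
        sq_le_sq' (abs_le.1 habs).1 (abs_le.1 habs).2
    _ = B ^ 2 * Real.exp (-(2 * (n * c))) := by rw [mul_pow, ← Real.exp_nat_mul]; ring_nf

section GNW

variable {Ω : Type*} {d n : ℕ} {x : Fin n → Ω → EuclideanSpace ℝ (Fin d)}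
  {ε a : Fin n → Ω → ℝ} {f : EuclideanSpace ℝ (Fin d) → ℝ}

theorem gnwEst_eq_sum_mul_div_sum (ha : ∀ i ω, 0 ≤ a i ω) (ω : Ω) :
    gnwEst x ε a f ω = ∑ i, (f (x i ω) + ε i ω) * (a i ω / ∑ j, a j ω) := by
  unfold gnwEst
  split_ifs with hpos
  · simp only [sum_div, mul_div_assoc]
  · have h0 : ∑ j, a j ω = 0 := le_antisymm (not_lt.1 hpos) (sum_nonneg fun j _ => ha j ω)
    simp [h0]

variable [MeasurableSpace Ω] {μ : Measure Ω} {B : ℝ}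

theorem memLp_gnwEst [IsFiniteMeasure μ] (hxm : ∀ i, Measurable (x i))
    (ham : ∀ i, Measurable (a i)) (ha : ∀ i ω, 0 ≤ a i ω) (hfm : Measurable f)
    (hB : ∀ z, |f z| ≤ B) (hε : ∀ i, MemLp (ε i) 2 μ) :
    MemLp (gnwEst x ε a f) 2 μ := by
  have hy : ∀ i, MemLp (fun ω => f (x i ω) + ε i ω) 2 μ := fun i =>
    (MemLp.of_bound (hfm.comp (hxm i)).aestronglyMeasurable B (ae_of_all _ fun ω => hB _)).add
      (hε i)
  have hwm : ∀ i, Measurable fun ω => a i ω / ∑ j, a j ω := fun i =>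
    (ham i).div (measurable_fun_sum _ fun j _ => ham j)
  rw [show gnwEst x ε a f = _ from funext (gnwEst_eq_sum_mul_div_sum ha)]
  refine (memLp_finsetSum univ fun i _ => (hy i).abs).of_le
    (aestronglyMeasurable_fun_sum _ fun i _ =>
      (hy i).aestronglyMeasurable.mul (hwm i).aestronglyMeasurable)
    (ae_of_all _ fun ω => ?_)
  rw [Real.norm_eq_abs, Real.norm_eq_abs]
  exact (abs_sum_mul_div_sum_le (ha · ω) _).trans (le_abs_self _)

theorem integral_gnwEst {i₀ : Fin n} (hxm : ∀ i, Measurable (x i))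
    (hεm : ∀ i, Measurable (ε i)) (ham : ∀ i, Measurable (a i))
    (hindep : iIndepFun (fun i ω => (x i ω, ε i ω, a i ω)) μ)
    (hid : ∀ i, IdentDistrib (fun ω => (x i ω, ε i ω, a i ω))
      (fun ω => (x i₀ ω, ε i₀ ω, a i₀ ω)) μ μ)
    (hbin : ∀ i ω, a i ω = 0 ∨ a i ω = 1)
    (hnoise : IndepFun (fun ω => (x i₀ ω, a i₀ ω)) (ε i₀) μ)
    (hεint : ∀ i, Integrable (ε i) μ) (hεmean : ∫ ω, ε i₀ ω ∂μ = 0)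
    (hfm : Measurable f) (hB : ∀ z, |f z| ≤ B)
    {c : ℝ} (hc : c = ∫ ω, a i₀ ω ∂μ) (hc0 : c ≠ 0)
    {S : ℝ} (hS : S = (∫ ω, f (x i₀ ω) * a i₀ ω ∂μ) / c) :
    ∫ ω, gnwEst x ε a f ω ∂μ = S * (1 - (1 - c) ^ n) := by
  have := hindep.isProbabilityMeasure
  have ha0 : ∀ i ω, 0 ≤ a i ω := fun i ω => by rcases hbin i ω with h | h <;> simp [h]
  have ha1 : ∀ i, ∀ᵐ ω ∂μ, ‖a i ω‖ ≤ 1 := fun i => ae_of_all _ fun ω => by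
    rcases hbin i ω with h | h <;> simp [h]
  have hid_integral : ∀ {φ : EuclideanSpace ℝ (Fin d) × ℝ × ℝ → ℝ}, Measurable φ → ∀ i,
      ∫ ω, φ (x i ω, ε i ω, a i ω) ∂μ = ∫ ω, φ (x i₀ ω, ε i₀ ω, a i₀ ω) ∂μ :=
    fun hφ i => ((hid i).comp hφ).integral_eq
  have hmean_a : ∀ i, ∫ ω, a i ω ∂μ = c := fun i => hc ▸ hid_integral measurable_snd.snd i
  have hfa : ∀ i, Integrable (fun ω => f (x i ω) * a i ω) μ := fun i =>
    (Integrable.of_bound (hfm.comp (hxm i)).aestronglyMeasurable B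
      (ae_of_all _ fun ω => hB _)).mul_bdd (ham i).aestronglyMeasurable (ha1 i)
  have hεa : ∀ i, Integrable (fun ω => ε i ω * a i ω) μ := fun i =>
    (hεint i).mul_bdd (ham i).aestronglyMeasurable (ha1 i)
  have hnoise_a : ∫ ω, ε i₀ ω * a i₀ ω ∂μ = 0 := by
    have hindep_εa : IndepFun (ε i₀) (a i₀) μ := (hnoise.comp measurable_snd measurable_id).symm
    rw [hindep_εa.integral_fun_mul_eq_mul_integral
      (hεm i₀).aestronglyMeasurable (ham i₀).aestronglyMeasurable, hεmean, zero_mul]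
  have hs : ∀ i, ∫ ω, (f (x i ω) + ε i ω) * a i ω ∂μ = S * ∫ ω, a i ω ∂μ := fun i => by
    rw [hid_integral (φ := fun p => (f p.1 + p.2.1) * p.2.2) (by fun_prop) i, hmean_a i]
    simp only [add_mul]
    rw [integral_add (hfa i₀) (hεa i₀), hnoise_a, add_zero, hS, div_mul_cancel₀ _ hc0]
  have hpairs : iIndepFun (fun i ω => (f (x i ω) + ε i ω, a i ω)) μ :=
    hindep.comp (fun _ p => (f p.1 + p.2.1, p.2.2)) fun _ => by fun_prop
  rw [integral_congr_ae (ae_of_all _ (gnwEst_eq_sum_mul_div_sum ha0)),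
    integral_sum_mul_div_sum (fun i => by fun_prop) ham hpairs hbin
      (fun i => by simpa only [add_mul] using (hfa i).fun_add (hεa i)) hs]
  simp [hmean_a]

end GNW

theorem gnw_proxies_close_general {Ω : Type*} [MeasurableSpace Ω]
    (μ : Measure Ω) [IsProbabilityMeasure μ]
    {d n : ℕ} (hn : 0 < n)
    (x : Fin n → Ω → EuclideanSpace ℝ (Fin d)) (ε a : Fin n → Ω → ℝ)
    (hxm : ∀ i, Measurable (x i)) (hεm : ∀ i, Measurable (ε i))
    (ham : ∀ i, Measurable (a i))
    (hindep : ProbabilityTheory.iIndepFun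
      (fun i ω => (x i ω, ε i ω, a i ω)) μ)
    (hid : ∀ i, ProbabilityTheory.IdentDistrib (fun ω => (x i ω, ε i ω, a i ω))
      (fun ω => (x ⟨0, hn⟩ ω, ε ⟨0, hn⟩ ω, a ⟨0, hn⟩ ω)) μ μ)
    (hbin : ∀ i ω, a i ω = 0 ∨ a i ω = 1)
    (hnoise : ∀ i, ProbabilityTheory.IndepFun (fun ω => (x i ω, a i ω)) (ε i) μ)
    (hεL2 : ∀ i, MemLp (ε i) 2 μ)
    (hεmean : ∀ i, ∫ ω, ε i ω ∂μ = 0)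
    (f : EuclideanSpace ℝ (Fin d) → ℝ) (hfm : Measurable f)
    (B : ℝ) (hB : ∀ z, |f z| ≤ B)
    (c : ℝ) (hc : c = ∫ ω, a ⟨0, hn⟩ ω ∂μ) (hcpos : 0 < c)
    (S : ℝ) (hS : S = (∫ ω, f (x ⟨0, hn⟩ ω) * a ⟨0, hn⟩ ω ∂μ) / c)
    (xpt : EuclideanSpace ℝ (Fin d)) :
    (0 ≤ ((S - f xpt) - ((∫ ω, gnwEst x ε a f ω ∂μ) - f xpt)) ^ 2 ∧
      ((S - f xpt) - ((∫ ω, gnwEst x ε a f ω ∂μ) - f xpt)) ^ 2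
        ≤ B ^ 2 * Real.exp (-(2 * (n * c)))) ∧
    (0 ≤ (∫ ω, (gnwEst x ε a f ω - S) ^ 2 ∂μ)
        - ∫ ω, (gnwEst x ε a f ω - ∫ ω', gnwEst x ε a f ω' ∂μ) ^ 2 ∂μ ∧
      (∫ ω, (gnwEst x ε a f ω - S) ^ 2 ∂μ)
        - (∫ ω, (gnwEst x ε a f ω - ∫ ω', gnwEst x ε a f ω' ∂μ) ^ 2 ∂μ)
        ≤ B ^ 2 * Real.exp (-(2 * (n * c)))) := by
  have ha0 : ∀ i ω, 0 ≤ a i ω := fun i ω => by rcases hbin i ω with h | h <;> simp [h]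
  have ha1 : ∀ i ω, a i ω ≤ 1 := fun i ω => by rcases hbin i ω with h | h <;> simp [h]
  have ha_int : Integrable (a ⟨0, hn⟩) μ :=
    .of_bound (ham _).aestronglyMeasurable 1 (ae_of_all _ fun ω => by
      rw [Real.norm_of_nonneg (ha0 _ ω)]; exact ha1 _ ω)
  have hc1 : c ≤ 1 :=
    hc ▸ (integral_mono ha_int (integrable_const 1) (ha1 _)).trans_eq (by simp)
  have hSB : |S| ≤ B :=
    hS ▸ hc ▸ abs_integral_mul_div_integral_le (fun ω => hB _) ha_int (ha0 _) (hc ▸ hcpos)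
  have hmean := integral_gnwEst hxm hεm ham hindep hid hbin (hnoise _)
    (fun i => (hεL2 i).integrable one_le_two) (hεmean _) hfm hB hc hcpos.ne' hS
  have hL2 := memLp_gnwEst (μ := μ) hxm ham ha0 hfm hB hεL2
  have hgap : (∫ ω, gnwEst x ε a f ω ∂μ - S) ^ 2 ≤ B ^ 2 * Real.exp (-(2 * (n * c))) := by
    rw [hmean, show S * (1 - (1 - c) ^ n) - S = -(S * (1 - c) ^ n) by ring, neg_sq]
    exact sq_mul_one_sub_pow_le hSB hc1 n
  rw [integral_sub_sq_eq_variance_add_sq hL2 S, ← variance_eq_integral hL2.aemeasurable,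
    add_sub_cancel_left]
  exact ⟨⟨sq_nonneg _, by rw [sub_sub_sub_cancel_right, ← neg_sub, neg_sq]; exact hgap⟩,
    sq_nonneg _, hgap⟩

/-- The bias and variance proxies of GNW are close to the true bias and variance:
with `b x = S - f x`, `Bias = E[fhat] - f x`, `v x = E[(fhat - S)^2]` and
`Var = E[(fhat - E fhat)^2]`, both `(b - Bias)^2` and `v - Var` lie in
`[0, B^2 * exp (-2 * d x)]`, where `d x = n * c`. -/
theorem gnw_proxies_close {Ω : Type*} [MeasurableSpace Ω]
    (μ : Measure Ω) [IsProbabilityMeasure μ]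
    {d n : ℕ} (hn : 0 < n)
    (x : Fin n → Ω → EuclideanSpace ℝ (Fin d)) (ε a : Fin n → Ω → ℝ)
    (hxm : ∀ i, Measurable (x i)) (hεm : ∀ i, Measurable (ε i))
    (ham : ∀ i, Measurable (a i))
    (hindep : ProbabilityTheory.iIndepFun
      (fun i ω => (x i ω, ε i ω, a i ω)) μ)
    (hid : ∀ i, ProbabilityTheory.IdentDistrib (fun ω => (x i ω, ε i ω, a i ω))
      (fun ω => (x ⟨0, hn⟩ ω, ε ⟨0, hn⟩ ω, a ⟨0, hn⟩ ω)) μ μ)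
    (hbin : ∀ i ω, a i ω = 0 ∨ a i ω = 1)
    (hnoise : ∀ i, ProbabilityTheory.IndepFun (fun ω => (x i ω, a i ω)) (ε i) μ)
    (hεint : ∀ i, Integrable (ε i) μ)
    (hεL2 : ∀ i, MemLp (ε i) 2 μ)
    (hεmean : ∀ i, ∫ ω, ε i ω ∂μ = 0)
    (k : EuclideanSpace ℝ (Fin d) → ℝ)
    (hcond : ∀ i, μ[a i|MeasurableSpace.comap (x i) inferInstance]
      =ᵐ[μ] fun ω => k (x i ω))
    (f : EuclideanSpace ℝ (Fin d) → ℝ) (hfm : Measurable f)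
    (B : ℝ) (hB : ∀ z, |f z| ≤ B)
    (c : ℝ) (hc : c = ∫ ω, a ⟨0, hn⟩ ω ∂μ) (hcpos : 0 < c)
    (S : ℝ) (hS : S = (∫ ω, f (x ⟨0, hn⟩ ω) * a ⟨0, hn⟩ ω ∂μ) / c)
    (σ : ℝ) (hεvar : ∀ i, ∫ ω, (ε i ω) ^ 2 ∂μ ≤ σ ^ 2)
    (xpt : EuclideanSpace ℝ (Fin d)) :
    (0 ≤ ((S - f xpt) - ((∫ ω, gnwEst x ε a f ω ∂μ) - f xpt)) ^ 2 ∧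
      ((S - f xpt) - ((∫ ω, gnwEst x ε a f ω ∂μ) - f xpt)) ^ 2
        ≤ B ^ 2 * Real.exp (-(2 * (n * c)))) ∧
    (0 ≤ (∫ ω, (gnwEst x ε a f ω - S) ^ 2 ∂μ)
        - ∫ ω, (gnwEst x ε a f ω - ∫ ω', gnwEst x ε a f ω' ∂μ) ^ 2 ∂μ ∧
      (∫ ω, (gnwEst x ε a f ω - S) ^ 2 ∂μ)
        - (∫ ω, (gnwEst x ε a f ω - ∫ ω', gnwEst x ε a f ω' ∂μ) ^ 2 ∂μ)
        ≤ B ^ 2 * Real.exp (-(2 * (n * c)))) :=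
  gnw_proxies_close_general μ hn x ε a hxm hεm ham hindep hid hbin hnoise hεL2 hεmean f hfm B hB c
    hc hcpos S hS xpt
end

section
/- In the setting of the perturbed NW theorem, for every i with φ(δ̃_i/τ) > 0 we have δ_i^a φ(δ̃_i/τ) ≤ (M_2 + M_1/2)^a τ^a φ(δ̃_i/τ), and hence the weighted bias satisfies |∑(f(x_i) - f(x_{n+1}))φ(δ̃_i/τ) / ∑ φ(δ̃_i/τ)| ≤ L(M_2 + M_1/2)^a τ^a whenever ∑ φ(δ̃_i/τ) > 0. -/
open Finset

/-- Weighted bias bound for perturbed Nadaraya–Watson: if `|δ̃_i - δ_i| ≤ M₁τ/2`,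
`φ(t) ≤ 1[t ≤ M₂]`, and `f` is `(a,L)`-Hölder, then for every `i` with
`φ(δ̃_i/τ) > 0` we have `δ_i^a φ(δ̃_i/τ) ≤ (M₂ + M₁/2)^a τ^a φ(δ̃_i/τ)`, and the
weighted bias is at most `L (M₂ + M₁/2)^a τ^a`. -/
theorem perturbed_nw_bias_bound {d n : ℕ}
    (x : Fin n → EuclideanSpace ℝ (Fin d)) (xq : EuclideanSpace ℝ (Fin d))
    (δ δt : Fin n → ℝ) (hδ : ∀ i, δ i = ‖x i - xq‖)
    (M₁ M₂ τ : ℝ) (hM₁ : 0 < M₁) (hM₂ : 0 < M₂) (hτ : 0 < τ)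
    (hpert : ∀ i, |δt i - δ i| ≤ M₁ * τ / 2)
    (φ : ℝ → ℝ) (hφ0 : ∀ t, 0 ≤ φ t)
    (hφ : ∀ t, φ t ≤ if t ≤ M₂ then (1 : ℝ) else 0)
    (f : EuclideanSpace ℝ (Fin d) → ℝ) (a L : ℝ) (ha : 0 < a) (ha1 : a ≤ 1) (hL : 0 < L)
    (hf : ∀ u v : EuclideanSpace ℝ (Fin d), |f u - f v| ≤ L * ‖u - v‖ ^ a) :
    (∀ i, 0 < φ (δt i / τ) →
      (δ i) ^ a * φ (δt i / τ) ≤ (M₂ + M₁ / 2) ^ a * τ ^ a * φ (δt i / τ)) ∧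
    (0 < ∑ i, φ (δt i / τ) →
      |(∑ i, (f (x i) - f xq) * φ (δt i / τ)) / ∑ i, φ (δt i / τ)|
        ≤ L * (M₂ + M₁ / 2) ^ a * τ ^ a) := by
  have hC : (0:ℝ) < M₂ + M₁ / 2 := by linarith
  have key : ∀ i, 0 < φ (δt i / τ) →
      (δ i) ^ a ≤ (M₂ + M₁ / 2) ^ a * τ ^ a := by
    intro i hi
    have hle : δt i / τ ≤ M₂ := by
      by_contra h
      have := hφ (δt i / τ)
      rw [if_neg h] at this
      linarith
    have hδt : δt i ≤ M₂ * τ := by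
      rw [div_le_iff₀ hτ] at hle; linarith
    have h1 : δ i ≤ (M₂ + M₁ / 2) * τ := by
      have := abs_le.mp (hpert i)
      linarith [this.1]
    have h0 : 0 ≤ δ i := by rw [hδ]; exact norm_nonneg _
    calc (δ i) ^ a ≤ ((M₂ + M₁ / 2) * τ) ^ a :=
          Real.rpow_le_rpow h0 h1 ha.le
      _ = (M₂ + M₁ / 2) ^ a * τ ^ a := Real.mul_rpow hC.le hτ.le
  constructor
  · intro i hi
    exact mul_le_mul_of_nonneg_right (key i hi) (hφ0 _)
  · intro hsum
    rw [abs_div, abs_of_pos hsum, div_le_iff₀ hsum]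
    calc |∑ i, (f (x i) - f xq) * φ (δt i / τ)|
        ≤ ∑ i, |(f (x i) - f xq) * φ (δt i / τ)| :=
          Finset.abs_sum_le_sum_abs _ _
      _ ≤ ∑ i, (L * (M₂ + M₁ / 2) ^ a * τ ^ a) * φ (δt i / τ) := by
          apply Finset.sum_le_sum
          intro i _
          rw [abs_mul, abs_of_nonneg (hφ0 _)]
          rcases eq_or_lt_of_le (hφ0 (δt i / τ)) with h | h
          · rw [← h, mul_zero, mul_zero]
          · have h1 : |f (x i) - f xq| ≤ L * (M₂ + M₁ / 2) ^ a * τ ^ a := by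
              calc |f (x i) - f xq| ≤ L * ‖x i - xq‖ ^ a := hf _ _
                _ = L * (δ i) ^ a := by rw [hδ]
                _ ≤ L * ((M₂ + M₁ / 2) ^ a * τ ^ a) :=
                    mul_le_mul_of_nonneg_left (key i h) hL.le
                _ = L * (M₂ + M₁ / 2) ^ a * τ ^ a := by ring
            exact mul_le_mul_of_nonneg_right h1 (hφ0 _)
      _ = (L * (M₂ + M₁ / 2) ^ a * τ ^ a) * ∑ i, φ (δt i / τ) := by
          rw [Finset.mul_sum]
end
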